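/- (The heat evolution solves the heat equation.) Let c > 0 and let f : ℝ → ℝ be bounded and continuous. Define Φ(t,x) = ∫_ℝ f(y)·(4πct)^(−1/2)·exp(−(x−y)²/(4ct)) dy for t > 0 and x ∈ ℝ. Then for every t > 0 and x ∈ ℝ, the section s ↦ Φ(s,x) is differentiable at t, the section y ↦ Φ(t,y) is twice differentiable at x, and ∂Φ/∂t(t,x) = c·∂²Φ/∂x²(t,x). -/

import Mathlib

open MeasureTheory Real

/-- The heat evolution `Φ(t,x) = ∫ f(y)·(4πct)^(−1/2)·exp(−(x−y)²/(4ct)) dy`. -/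
noncomputable def heatEvol (c : ℝ) (f : ℝ → ℝ) (t x : ℝ) : ℝ :=
  ∫ y : ℝ, f y * ((4 * π * c * t) ^ (-(1 : ℝ) / 2)
    * Real.exp (-(x - y) ^ 2 / (4 * c * t)))

open Filter Topology

/-! Differentiate under the integral sign. The kernel derivatives `∂ₓK`, `∂ₓ²K` and
`∂ₜK = c ∂ₓ²K` are quadratic polynomials times the Gaussian; for `s ∈ [t/2, 2t]` and shifts
`|h| ≤ 1` they are all dominated by a multiple of `(1 + w²) exp (-w²/(16ct))`, and
`f` is bounded, so dominated convergence differentiates `Φ` through the integral and the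
kernel identity passes to `Φ`. -/

theorem integrable_one_add_sq_mul_exp_neg_mul_sq {b : ℝ} (hb : 0 < b) :
    Integrable fun w : ℝ => (1 + w ^ 2) * exp (-b * w ^ 2) := by
  have hsq : Integrable fun w : ℝ => w ^ 2 * exp (-b * w ^ 2) := by
    simpa [Real.rpow_two] using integrable_rpow_mul_exp_neg_mul_sq hb (s := 2) (by norm_num)
  simpa [add_mul, Pi.add_def] using (integrable_exp_neg_mul_sq hb).add hsq

theorem hasDerivAt_integral_bdd_mul {α : Type*} [MeasurableSpace α] {μ : Measure α}
    {f : α → ℝ} {C : ℝ} (hf : AEStronglyMeasurable f μ) (hfC : ∀ a, |f a| ≤ C)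
    {F F' : ℝ → α → ℝ} {G : α → ℝ} {s₀ : ℝ} {S : Set ℝ} (hS : S ∈ 𝓝 s₀)
    (hF_meas : ∀ s, AEStronglyMeasurable (F s) μ) (hF_int : Integrable (F s₀) μ)
    (hF'_meas : AEStronglyMeasurable (F' s₀) μ) (hG : Integrable G μ)
    (hbound : ∀ s ∈ S, ∀ a, |F' s a| ≤ G a)
    (hderiv : ∀ s ∈ S, ∀ a, HasDerivAt (F · a) (F' s a) s) :
    HasDerivAt (fun s => ∫ a, f a * F s a ∂μ) (∫ a, f a * F' s₀ a ∂μ) s₀ := by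
  have hf_bdd : ∀ᵐ a ∂μ, ‖f a‖ ≤ C := ae_of_all _ hfC
  refine (hasDerivAt_integral_of_dominated_loc_of_deriv_le hS
    (Eventually.of_forall fun s => hf.mul (hF_meas s))
    (hF_int.bdd_mul hf hf_bdd) (hf.mul hF'_meas)
    (ae_of_all _ fun a s hs => ?_) (hG.const_mul C)
    (ae_of_all _ fun a s hs => (hderiv s hs a).const_mul (f a))).2
  rw [norm_mul, Real.norm_eq_abs, Real.norm_eq_abs]
  exact mul_le_mul (hfC a) (hbound s hs a) (abs_nonneg _) ((abs_nonneg _).trans (hfC a))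

theorem hasDerivAt_integral_mul_comp_sub {f k k' G : ℝ → ℝ} {C : ℝ}
    (hf : AEStronglyMeasurable f) (hfC : ∀ y, |f y| ≤ C) (hk : Integrable k)
    (hderiv : ∀ w, HasDerivAt k (k' w) w) (hG : Integrable G)
    (hbound : ∀ w h, |h| ≤ 1 → |k' (w + h)| ≤ G w) (x : ℝ) :
    HasDerivAt (fun x => ∫ y, f y * k (x - y)) (∫ y, f y * k' (x - y)) x := by
  have hk_cont : Continuous k := continuous_iff_continuousAt.2 fun w => (hderiv w).continuousAt
  have hk'_meas : Measurable k' := by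
    rw [show k' = deriv k from funext fun w => (hderiv w).deriv.symm]
    exact measurable_deriv k
  refine hasDerivAt_integral_bdd_mul (F' := fun x' y => k' (x' - y)) hf hfC
    (Icc_mem_nhds (sub_one_lt x) (lt_add_one x))
    (fun x' => (hk_cont.comp (continuous_sub_left x')).aestronglyMeasurable)
    (hk.comp_sub_left x) (hk'_meas.comp (measurable_const.sub measurable_id)).aestronglyMeasurable
    (hG.comp_sub_left x) (fun x' hx' y => ?_)
    (fun x' _ y => (hderiv (x' - y)).comp_sub_const x' y)
  have hshift : |x' - x| ≤ 1 := abs_sub_le_iff.2 ⟨by linarith [hx'.2], by linarith [hx'.1]⟩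
  simpa [sub_add_sub_cancel'] using hbound (x - y) (x' - x) hshift

noncomputable section

def heatKernel (c t w : ℝ) : ℝ :=
  (4 * π * c * t) ^ (-(1 : ℝ) / 2) * exp (-w ^ 2 / (4 * c * t))

def heatKernelDeriv (c t w : ℝ) : ℝ := -w / (2 * c * t) * heatKernel c t w

def heatKernelDeriv2 (c t w : ℝ) : ℝ :=
  (w ^ 2 / (4 * c ^ 2 * t ^ 2) - 1 / (2 * c * t)) * heatKernel c t w

variable {c t : ℝ}

theorem heatKernel_nonneg (hc : 0 < c) (ht : 0 < t) (w : ℝ) : 0 ≤ heatKernel c t w := by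
  unfold heatKernel; positivity

theorem hasDerivAt_heatKernel (w : ℝ) :
    HasDerivAt (heatKernel c t) (heatKernelDeriv c t w) w := by
  have hexp : HasDerivAt (fun v => exp (-v ^ 2 / (4 * c * t)))
      (exp (-w ^ 2 / (4 * c * t)) * (-(2 * w) / (4 * c * t))) w := by
    simpa using ((hasDerivAt_pow 2 w).neg.div_const (4 * c * t)).exp
  refine (hexp.const_mul _ : HasDerivAt (heatKernel c t) _ w).congr_deriv ?_
  simp only [heatKernelDeriv, heatKernel]; ring

theorem hasDerivAt_heatKernelDeriv (w : ℝ) :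
    HasDerivAt (heatKernelDeriv c t) (heatKernelDeriv2 c t w) w := by
  have hlin : HasDerivAt (fun v => -v / (2 * c * t)) (-1 / (2 * c * t)) w := by
    simpa using (hasDerivAt_neg w).div_const (2 * c * t)
  refine (hlin.mul (hasDerivAt_heatKernel w) :
    HasDerivAt (heatKernelDeriv c t) _ w).congr_deriv ?_
  simp only [heatKernelDeriv2, heatKernelDeriv]; ring

theorem hasDerivAt_heatKernel_time (hc : 0 < c) (ht : 0 < t) (w : ℝ) :
    HasDerivAt (fun s => heatKernel c s w) (c * heatKernelDeriv2 c t w) t := by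
  have hpos : 0 < 4 * π * c * t := by positivity
  have hpow : HasDerivAt (fun s => (4 * π * c * s) ^ (-(1 : ℝ) / 2))
      (-(1 : ℝ) / 2 * (4 * π * c * t) ^ (-(1 : ℝ) / 2 - 1) * (4 * π * c)) t := by
    have hlin : HasDerivAt (fun s => 4 * π * c * s) (4 * π * c) t := by
      simpa using (hasDerivAt_id t).const_mul (4 * π * c)
    exact (Real.hasDerivAt_rpow_const (Or.inl hpos.ne')).comp t hlin
  have hexp : HasDerivAt (fun s => exp (-w ^ 2 / (4 * c * s)))
      (exp (-w ^ 2 / (4 * c * t)) * (-w ^ 2 / (4 * c) * -(t ^ 2)⁻¹)) t := by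
    have hform : ∀ s, -w ^ 2 / (4 * c * s) = -w ^ 2 / (4 * c) * s⁻¹ := fun s => by ring
    simp only [hform]
    exact ((hasDerivAt_inv ht.ne').const_mul _).exp
  refine (hpow.mul hexp : HasDerivAt (fun s => heatKernel c s w) _ t).congr_deriv ?_
  rw [Real.rpow_sub hpos, Real.rpow_one]
  simp only [heatKernelDeriv2, heatKernel]
  field_simp
  ring

theorem one_add_sq_mul_heatKernel_le (hc : 0 < c) (ht : 0 < t) {s : ℝ}
    (hs : s ∈ Set.Icc (t / 2) (2 * t)) (w : ℝ) {h : ℝ} (hh : |h| ≤ 1) :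
    (1 + (w + h) ^ 2) * heatKernel c s (w + h)
      ≤ 3 * (2 * π * c * t) ^ (-(1 : ℝ) / 2) * exp (1 / (2 * c * t))
        * ((1 + w ^ 2) * exp (-(1 / (16 * c * t)) * w ^ 2)) := by
  obtain ⟨hs₁, hs₂⟩ := hs
  have hs₀ : 0 < s := by linarith
  have hh2 : h ^ 2 ≤ 1 := by nlinarith [abs_le.mp hh]
  have hpoly : 1 + (w + h) ^ 2 ≤ 3 * (1 + w ^ 2) := by nlinarith [sq_nonneg (w - h)]
  have hpref : (4 * π * c * s) ^ (-(1 : ℝ) / 2) ≤ (2 * π * c * t) ^ (-(1 : ℝ) / 2) :=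
    Real.rpow_le_rpow_of_nonpos (by positivity) (by nlinarith [mul_pos pi_pos hc]) (by norm_num)
  have hexp : -(w + h) ^ 2 / (4 * c * s) ≤ 1 / (2 * c * t) + -(1 / (16 * c * t)) * w ^ 2 := by
    have hsq : w ^ 2 / 2 - 1 ≤ (w + h) ^ 2 := by nlinarith [sq_nonneg (w + 2 * h)]
    calc -(w + h) ^ 2 / (4 * c * s) ≤ -(w ^ 2 / 2 - 1) / (4 * c * s) := by gcongr
      _ = 1 / (4 * c * s) - w ^ 2 / (8 * c * s) := by field_simp; ring
      _ ≤ 1 / (2 * c * t) - w ^ 2 / (16 * c * t) := by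
        gcongr 1 / ?_ - w ^ 2 / ?_ <;> nlinarith
      _ = 1 / (2 * c * t) + -(1 / (16 * c * t)) * w ^ 2 := by ring
  calc (1 + (w + h) ^ 2) * heatKernel c s (w + h)
      ≤ 3 * (1 + w ^ 2) * ((2 * π * c * t) ^ (-(1 : ℝ) / 2)
          * exp (1 / (2 * c * t) + -(1 / (16 * c * t)) * w ^ 2)) := by
        unfold heatKernel; gcongr
    _ = _ := by rw [exp_add]; ring

theorem abs_mul_heatKernel_le (hc : 0 < c) {s : ℝ} (hs : 0 < s) {p A v : ℝ}
    (hp : |p| ≤ A * (1 + v ^ 2)) :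
    |p * heatKernel c s v| ≤ A * ((1 + v ^ 2) * heatKernel c s v) := by
  rw [abs_mul, abs_of_nonneg (heatKernel_nonneg hc hs v), ← mul_assoc]
  exact mul_le_mul_of_nonneg_right hp (heatKernel_nonneg hc hs v)

theorem abs_heatKernelDeriv_le (hc : 0 < c) (ht : 0 < t) {s : ℝ} (hs : t / 2 ≤ s) (v : ℝ) :
    |heatKernelDeriv c s v|
      ≤ (1 + 1 / (c * t) + (1 / (c * t)) ^ 2) * ((1 + v ^ 2) * heatKernel c s v) := by
  have hs₀ : 0 < s := by linarith
  have hu : 1 / (2 * c * s) ≤ 1 / (c * t) :=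
    one_div_le_one_div_of_le (by positivity) (by nlinarith)
  have hv : |v| ≤ 1 + v ^ 2 := by nlinarith [sq_abs v, sq_nonneg (|v| - 1)]
  refine abs_mul_heatKernel_le hc hs₀ ?_
  rw [abs_div, abs_neg, abs_of_pos (by positivity : (0 : ℝ) < 2 * c * s), div_eq_mul_one_div]
  calc |v| * (1 / (2 * c * s)) ≤ (1 + v ^ 2) * (1 / (c * t)) := by gcongr
    _ ≤ _ := by nlinarith [sq_nonneg v, sq_nonneg (1 / (c * t))]

theorem abs_heatKernelDeriv2_le (hc : 0 < c) (ht : 0 < t) {s : ℝ} (hs : t / 2 ≤ s) (v : ℝ) :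
    |heatKernelDeriv2 c s v|
      ≤ (1 + 1 / (c * t) + (1 / (c * t)) ^ 2) * ((1 + v ^ 2) * heatKernel c s v) := by
  have hs₀ : 0 < s := by linarith
  have hu : 1 / (2 * c * s) ≤ 1 / (c * t) :=
    one_div_le_one_div_of_le (by positivity) (by nlinarith)
  have hsq : v ^ 2 / (4 * c ^ 2 * s ^ 2) = v ^ 2 * (1 / (2 * c * s)) ^ 2 := by ring
  refine abs_mul_heatKernel_le hc hs₀ ?_
  calc |v ^ 2 / (4 * c ^ 2 * s ^ 2) - 1 / (2 * c * s)|
      ≤ v ^ 2 / (4 * c ^ 2 * s ^ 2) + 1 / (2 * c * s) := by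
        refine (abs_sub _ _).trans_eq ?_
        rw [abs_of_nonneg (by positivity), abs_of_nonneg (by positivity)]
    _ ≤ v ^ 2 * (1 / (c * t)) ^ 2 + 1 / (c * t) := by rw [hsq]; gcongr
    _ ≤ _ := by nlinarith [sq_nonneg v, sq_nonneg (1 / (c * t)), one_div_pos.mpr (mul_pos hc ht)]

theorem continuous_heatKernel (c t : ℝ) : Continuous (heatKernel c t) := by
  unfold heatKernel; fun_prop

theorem continuous_heatKernelDeriv (c t : ℝ) : Continuous (heatKernelDeriv c t) := by
  unfold heatKernelDeriv heatKernel; fun_prop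

theorem continuous_heatKernelDeriv2 (c t : ℝ) : Continuous (heatKernelDeriv2 c t) := by
  unfold heatKernelDeriv2 heatKernel; fun_prop

theorem integrable_heatKernel (hc : 0 < c) (ht : 0 < t) : Integrable (heatKernel c t) := by
  have hform : heatKernel c t
      = fun w => (4 * π * c * t) ^ (-(1 : ℝ) / 2) * exp (-(1 / (4 * c * t)) * w ^ 2) := by
    ext w; simp only [heatKernel]; congr 2; ring
  rw [hform]
  exact (integrable_exp_neg_mul_sq (by positivity)).const_mul _

theorem exists_heatKernelDeriv_bound (hc : 0 < c) (ht : 0 < t) :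
    ∃ M, ∀ s ∈ Set.Icc (t / 2) (2 * t), ∀ w h, |h| ≤ 1 →
      |heatKernelDeriv c s (w + h)| ≤ M * ((1 + w ^ 2) * exp (-(1 / (16 * c * t)) * w ^ 2)) ∧
      |heatKernelDeriv2 c s (w + h)| ≤ M * ((1 + w ^ 2) * exp (-(1 / (16 * c * t)) * w ^ 2)) := by
  set A := 1 + 1 / (c * t) + (1 / (c * t)) ^ 2
  set B := 3 * (2 * π * c * t) ^ (-(1 : ℝ) / 2) * exp (1 / (2 * c * t))
  refine ⟨A * B, fun s hs w h hh => ?_⟩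
  have hA : 0 ≤ A := by positivity
  have hmaj := one_add_sq_mul_heatKernel_le hc ht hs w hh
  constructor
  · calc _ ≤ A * ((1 + (w + h) ^ 2) * heatKernel c s (w + h)) :=
          abs_heatKernelDeriv_le hc ht hs.1 _
      _ ≤ _ := by rw [mul_assoc]; gcongr
  · calc _ ≤ A * ((1 + (w + h) ^ 2) * heatKernel c s (w + h)) :=
          abs_heatKernelDeriv2_le hc ht hs.1 _
      _ ≤ _ := by rw [mul_assoc]; gcongr

end

section HeatEvolution

variable {c t : ℝ} {f : ℝ → ℝ} {C : ℝ}

theorem hasDerivAt_heatEvol_space (hc : 0 < c) (ht : 0 < t) (hf : AEStronglyMeasurable f)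
    (hfC : ∀ y, |f y| ≤ C) (x : ℝ) :
    HasDerivAt (fun x => heatEvol c f t x) (∫ y, f y * heatKernelDeriv c t (x - y)) x := by
  obtain ⟨M, hM⟩ := exists_heatKernelDeriv_bound hc ht
  exact hasDerivAt_integral_mul_comp_sub hf hfC (integrable_heatKernel hc ht)
    hasDerivAt_heatKernel
    ((integrable_one_add_sq_mul_exp_neg_mul_sq (by positivity)).const_mul M)
    (fun w h hh => (hM t ⟨by linarith, by linarith⟩ w h hh).1) x

theorem hasDerivAt_integral_heatKernelDeriv (hc : 0 < c) (ht : 0 < t)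
    (hf : AEStronglyMeasurable f) (hfC : ∀ y, |f y| ≤ C) (x : ℝ) :
    HasDerivAt (fun x => ∫ y, f y * heatKernelDeriv c t (x - y))
      (∫ y, f y * heatKernelDeriv2 c t (x - y)) x := by
  obtain ⟨M, hM⟩ := exists_heatKernelDeriv_bound hc ht
  have ht_mem : t ∈ Set.Icc (t / 2) (2 * t) := ⟨by linarith, by linarith⟩
  have hG := (integrable_one_add_sq_mul_exp_neg_mul_sq
    (by positivity : 0 < 1 / (16 * c * t))).const_mul M
  have hint : Integrable (heatKernelDeriv c t) :=
    hG.mono' (continuous_heatKernelDeriv c t).aestronglyMeasurable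
      (ae_of_all _ fun w => by simpa using (hM t ht_mem w 0 (by simp)).1)
  exact hasDerivAt_integral_mul_comp_sub hf hfC hint hasDerivAt_heatKernelDeriv hG
    (fun w h hh => (hM t ht_mem w h hh).2) x

theorem hasDerivAt_heatEvol_time (hc : 0 < c) (ht : 0 < t) (hf : AEStronglyMeasurable f)
    (hfC : ∀ y, |f y| ≤ C) (x : ℝ) :
    HasDerivAt (fun s => heatEvol c f s x) (c * ∫ y, f y * heatKernelDeriv2 c t (x - y)) t := by
  obtain ⟨M, hM⟩ := exists_heatKernelDeriv_bound hc ht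
  have hG := (integrable_one_add_sq_mul_exp_neg_mul_sq
    (by positivity : 0 < 1 / (16 * c * t))).const_mul M
  have h := hasDerivAt_integral_bdd_mul (F := fun s y => heatKernel c s (x - y))
    (F' := fun s y => c * heatKernelDeriv2 c s (x - y)) hf hfC
    (Icc_mem_nhds (by linarith : t / 2 < t) (by linarith : t < 2 * t))
    (fun s => ((continuous_heatKernel c s).comp (continuous_sub_left x)).aestronglyMeasurable)
    ((integrable_heatKernel hc ht).comp_sub_left x)
    ((continuous_const.mul ((continuous_heatKernelDeriv2 c t).comp
      (continuous_sub_left x))).aestronglyMeasurable)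
    ((hG.comp_sub_left x).const_mul c) (fun s hs y => ?_)
    (fun s hs y => hasDerivAt_heatKernel_time hc (by linarith [hs.1]) (x - y))
  · simp only [mul_left_comm _ c, integral_const_mul] at h
    exact h
  · rw [abs_mul, abs_of_pos hc]
    exact mul_le_mul_of_nonneg_left (by simpa using (hM s hs (x - y) 0 (by simp)).2) hc.le

end HeatEvolution

/-- The heat evolution of a bounded continuous function solves the heat
equation `∂Φ/∂t = c·∂²Φ/∂x²` for `t > 0`. -/
theorem heatEvol_solves_heat_equation
    (c : ℝ) (hc : 0 < c) (f : ℝ → ℝ) (hfc : Continuous f)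
    (hfb : ∃ C, ∀ x, |f x| ≤ C) :
    ∀ t : ℝ, 0 < t → ∀ x : ℝ,
      DifferentiableAt ℝ (fun s => heatEvol c f s x) t ∧
      DifferentiableAt ℝ (fun y => heatEvol c f t y) x ∧
      DifferentiableAt ℝ (deriv (fun y => heatEvol c f t y)) x ∧
      deriv (fun s => heatEvol c f s x) t
        = c * deriv (deriv (fun y => heatEvol c f t y)) x := by
  obtain ⟨C, hC⟩ := hfb
  intro t ht x
  have hf : AEStronglyMeasurable f := hfc.aestronglyMeasurable
  have hΦ' : deriv (fun y => heatEvol c f t y)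
      = fun x => ∫ y, f y * heatKernelDeriv c t (x - y) :=
    funext fun x => (hasDerivAt_heatEvol_space hc ht hf hC x).deriv
  have hΦ'' := hasDerivAt_integral_heatKernelDeriv hc ht hf hC x
  have hΦt := hasDerivAt_heatEvol_time hc ht hf hC x
  refine ⟨hΦt.differentiableAt, (hasDerivAt_heatEvol_space hc ht hf hC x).differentiableAt,
    hΦ' ▸ hΦ''.differentiableAt, ?_⟩
  rw [hΦt.deriv, hΦ', hΦ''.deriv]
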